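/- For every n ≥ 4, the normalizer in SU(2) of the generalized quaternion group Q_{2^n} equals Q_{2^{n+1}}. -/

import Mathlib

/-!
For a subgroup `Z` of the circle containing `-1` let `Q_Z = diag(Z) ∪ w·diag(Z)` (the
dicyclic group), where `diag z = diag(z, z̄)`; `Q_{2^{q+1}}` is `Q_Z` for `Z = μ_{2^q}`.
Every anti-diagonal element of `SU(2)` squares to `-1`, so if `Z` has an element `z` with
`z⁴ ≠ 1`, a normalizing `g` must conjugate `diag z` to a diagonal matrix; as `diag z` has
distinct eigenvalues, `g` is then diagonal or anti-diagonal, and after multiplying by `w` we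
may take `g = diag u`. Now `g w g⁻¹ = w·diag(u⁻²)` lies in `Q_Z` exactly when `u² ∈ Z`. Hence
the normalizer of `Q_Z` is `Q_{√Z}`, and the square roots of `μ_{2^q}` form `μ_{2^{q+1}}`.
-/

open Matrix Complex

noncomputable section

abbrev SU2 := Matrix.specialUnitaryGroup (Fin 2) ℂ

instance SU2.instGroup : Group SU2 :=
  { (inferInstance : Monoid SU2) with
    inv := fun A => ⟨star A.1, by
      rcases A.2 with ⟨hu, hd⟩
      refine ⟨⟨?_, ?_⟩, ?_⟩
      · simpa using hu.2
      · simpa using hu.1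
      · show (star A.1).det = 1
        rw [Matrix.star_eq_conjTranspose, Matrix.det_conjTranspose]
        simp [show A.1.det = 1 from hd]⟩
    inv_mul_cancel := fun A => Subtype.ext A.2.1.1 }

lemma w_mem : !![(0:ℂ), -1; 1, 0] ∈ Matrix.specialUnitaryGroup (Fin 2) ℂ := by
  rw [Matrix.mem_specialUnitaryGroup_iff, Matrix.mem_unitaryGroup_iff]
  constructor
  · ext i j
    fin_cases i <;> fin_cases j <;>
      simp [Matrix.mul_apply, Fin.sum_univ_two, Matrix.star_apply, Complex.star_def]
  · simp [Matrix.det_fin_two]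

def w : SU2 := ⟨!![(0:ℂ), -1; 1, 0], w_mem⟩

lemma xi_conj (m : ℕ) : (starRingEnd ℂ) (2 * Real.pi * Complex.I / m) =
    -(2 * Real.pi * Complex.I / m) := by
  simp [map_div₀, Complex.conj_I, Complex.conj_ofReal, map_ofNat]
  ring

lemma xi_conj_exp (m : ℕ) : (starRingEnd ℂ) (Complex.exp (2 * Real.pi * Complex.I / m)) =
    Complex.exp (-(2 * Real.pi * Complex.I / m)) := by
  rw [← Complex.exp_conj, xi_conj]

lemma xi_conj_exp' (m : ℕ) : (starRingEnd ℂ) (Complex.exp (-(2 * Real.pi * Complex.I / m))) =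
    Complex.exp (2 * Real.pi * Complex.I / m) := by
  rw [← Complex.exp_conj, map_neg, xi_conj, neg_neg]

lemma xi_mem (m : ℕ) :
    !![Complex.exp (2 * Real.pi * Complex.I / m), 0; 0,
       Complex.exp (-(2 * Real.pi * Complex.I / m))]
      ∈ Matrix.specialUnitaryGroup (Fin 2) ℂ := by
  rw [Matrix.mem_specialUnitaryGroup_iff, Matrix.mem_unitaryGroup_iff]
  have hstar : star (!![Complex.exp (2 * Real.pi * Complex.I / m), 0; 0,
       Complex.exp (-(2 * Real.pi * Complex.I / m))]) =
      !![Complex.exp (-(2 * Real.pi * Complex.I / m)), 0; 0,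
       Complex.exp (2 * Real.pi * Complex.I / m)] := by
    ext i j
    fin_cases i <;> fin_cases j <;>
      simp [Matrix.star_apply, Complex.star_def, xi_conj_exp m, xi_conj_exp' m]
  constructor
  · rw [hstar]
    ext i j
    fin_cases i <;> fin_cases j <;>
      simp [Matrix.mul_apply, Fin.sum_univ_two, ← Complex.exp_add]
  · simp [Matrix.det_fin_two, ← Complex.exp_add]

def ξ (m : ℕ) : SU2 :=
  ⟨!![Complex.exp (2 * Real.pi * Complex.I / m), 0; 0,
      Complex.exp (-(2 * Real.pi * Complex.I / m))], xi_mem m⟩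

/-- `μ m` : the cyclic subgroup of `SU2` generated by `ξ m`. -/
def μ (m : ℕ) : Subgroup SU2 := Subgroup.zpowers (ξ m)

/-- `genQ q` is the generalized quaternion group `Q_{2^{q+1}} ⊆ SU2`,
generated by `ξ_{2^q}` and `w`. -/
def genQ (q : ℕ) : Subgroup SU2 := Subgroup.closure {ξ (2 ^ q), w}

/-- Lower central series of a subgroup, as subgroups of the ambient group:
`lcs H k = Γ^{k+1}(H)`, so `lcs H 0 = Γ¹(H) = H` and `lcs H (k+1) = ⁅lcs H k, H⁆`. -/
def lcs {G : Type*} [Group G] (H : Subgroup G) : ℕ → Subgroup G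
  | 0 => H
  | (k + 1) => ⁅lcs H k, H⁆

/-- The set of diagonal matrices in `SU2`: the maximal torus `T`. -/
def Tset : Set SU2 :=
  {x | (x : Matrix (Fin 2) (Fin 2) ℂ) 0 1 = 0 ∧ (x : Matrix (Fin 2) (Fin 2) ℂ) 1 0 = 0}

/-- The set of anti-diagonal matrices in `SU2`: the coset `wT`. -/
def wTset : Set SU2 :=
  {x | (x : Matrix (Fin 2) (Fin 2) ℂ) 0 0 = 0 ∧ (x : Matrix (Fin 2) (Fin 2) ℂ) 1 1 = 0}

/-- `PU(2)`, the quotient of `SU(2)` by its center `{±I}`. -/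
abbrev PU2 := SU2 ⧸ Subgroup.center SU2

lemma diag_circle_mem_specialUnitaryGroup (z : Circle) :
    !![(z : ℂ), 0; 0, ((z⁻¹ : Circle) : ℂ)] ∈ specialUnitaryGroup (Fin 2) ℂ := by
  have hz : (z : ℂ) * ((z⁻¹ : Circle) : ℂ) = 1 := by
    rw [← Circle.coe_mul, mul_inv_cancel, Circle.coe_one]
  rw [mem_specialUnitaryGroup_iff, mem_unitaryGroup_iff, det_fin_two_of, hz]
  refine ⟨?_, by simp⟩
  ext i j
  fin_cases i <;> fin_cases j <;>
    simp [mul_apply, Fin.sum_univ_two, star_apply, ← Circle.coe_inv_eq_conj]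

def diagSU2 : Circle →* SU2 where
  toFun z := ⟨!![(z : ℂ), 0; 0, ((z⁻¹ : Circle) : ℂ)],
    diag_circle_mem_specialUnitaryGroup z⟩
  map_one' := by ext i j; fin_cases i <;> fin_cases j <;> simp
  map_mul' z z' := by ext i j; fin_cases i <;> fin_cases j <;> simp [mul_comm]

lemma coe_diagSU2 (z : Circle) :
    (diagSU2 z : Matrix (Fin 2) (Fin 2) ℂ) = !![(z : ℂ), 0; 0, ((z⁻¹ : Circle) : ℂ)] := rfl

lemma coe_w : (w : Matrix (Fin 2) (Fin 2) ℂ) = !![0, -1; 1, 0] := rfl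

lemma diagSU2_injective : Function.Injective diagSU2 := fun z z' h =>
  Circle.ext (by simpa [coe_diagSU2] using congrFun₂ (congrArg Subtype.val h) 0 0)

lemma diagSU2_mul_w (z : Circle) : diagSU2 z * w = w * diagSU2 z⁻¹ := by
  apply Subtype.ext
  simp only [Submonoid.coe_mul, coe_diagSU2, coe_w, inv_inv]
  ext i j; fin_cases i <;> fin_cases j <;> simp

lemma w_mul_w : w * w = diagSU2 (-1) := by
  apply Subtype.ext
  simp only [Submonoid.coe_mul, coe_diagSU2, coe_w]
  ext i j; fin_cases i <;> fin_cases j <;> simp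

lemma diagSU2_neg_one_mem_center : diagSU2 (-1) ∈ Subgroup.center SU2 := by
  rw [Subgroup.mem_center_iff]
  intro g
  apply Subtype.ext
  simp only [Submonoid.coe_mul, coe_diagSU2]
  ext i j; fin_cases i <;> fin_cases j <;> simp [mul_apply, Fin.sum_univ_two]

lemma diagSU2_ne_w_mul (z z' : Circle) : diagSU2 z ≠ w * diagSU2 z' := by
  intro h
  simpa [coe_diagSU2, coe_w] using congrFun₂ (congrArg Subtype.val h) 0 0

def ζ (m : ℕ) : Circle := Circle.exp (2 * Real.pi / m)

lemma coe_ζ (m : ℕ) : (ζ m : ℂ) = Complex.exp (2 * Real.pi * Complex.I / m) := by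
  rw [ζ, Circle.coe_exp]; push_cast; ring_nf

lemma ξ_eq_diagSU2 (m : ℕ) : ξ m = diagSU2 (ζ m) := by
  apply Subtype.ext
  rw [coe_diagSU2, Circle.coe_inv, coe_ζ, ← Complex.exp_neg]
  rfl

lemma isPrimitiveRoot_ζ {m : ℕ} (hm : m ≠ 0) : IsPrimitiveRoot (ζ m) m := by
  refine IsPrimitiveRoot.of_map_of_injective (f := Circle.coeHom) ?_ Circle.coe_injective
  change IsPrimitiveRoot (ζ m : ℂ) m
  rw [coe_ζ]
  exact Complex.isPrimitiveRoot_exp m hm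

lemma ζ_pow_four_ne_one {m : ℕ} (hm : 4 < m) : ζ m ^ 4 ≠ 1 :=
  (isPrimitiveRoot_ζ (by omega)).pow_ne_one_of_pos_of_lt (by norm_num) hm

lemma ζ_two_mul_sq (m : ℕ) : ζ (2 * m) ^ 2 = ζ m := by
  rw [ζ, ζ, ← Circle.exp_natCast_mul]
  congr 1
  push_cast
  rcases eq_or_ne (m : ℝ) 0 with hm | hm
  · simp [hm]
  · field_simp

lemma ζ_two_mul_zpow_sq (m : ℕ) (k : ℤ) : (ζ (2 * m) ^ k) ^ 2 = ζ m ^ k := by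
  rw [← zpow_natCast, zpow_comm, zpow_natCast, ζ_two_mul_sq]

lemma ζ_two_mul_pow_self {m : ℕ} (hm : m ≠ 0) : ζ (2 * m) ^ m = -1 := by
  apply Circle.ext
  rw [Circle.coe_pow, coe_ζ, ← Complex.exp_nat_mul, Circle.coe_neg, Circle.coe_one,
    ← Complex.exp_pi_mul_I]
  congr 1
  have : (m : ℂ) ≠ 0 := by exact_mod_cast hm
  push_cast
  field_simp

lemma Circle.eq_one_or_eq_neg_one_of_sq_eq_one {v : Circle} (hv : v ^ 2 = 1) :
    v = 1 ∨ v = -1 := by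
  have : (v : ℂ) * v = 1 := by rw [← sq, ← Circle.coe_pow, hv, Circle.coe_one]
  rcases mul_self_eq_one_iff.1 this with h | h
  · exact Or.inl (Circle.ext h)
  · exact Or.inr (Circle.ext h)

lemma comap_sq_zpowers_ζ {m : ℕ} (hm : m ≠ 0) :
    (Subgroup.zpowers (ζ m)).comap (powMonoidHom 2) = Subgroup.zpowers (ζ (2 * m)) := by
  ext u
  rw [Subgroup.mem_comap, powMonoidHom_apply]
  constructor
  · intro hu
    obtain ⟨k, hk⟩ := Subgroup.mem_zpowers_iff.1 hu
    have hsq : (u * (ζ (2 * m) ^ k)⁻¹) ^ 2 = 1 := by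
      rw [mul_pow, inv_pow, ζ_two_mul_zpow_sq, hk, mul_inv_cancel]
    have hsign : u * (ζ (2 * m) ^ k)⁻¹ ∈ Subgroup.zpowers (ζ (2 * m)) := by
      rcases Circle.eq_one_or_eq_neg_one_of_sq_eq_one hsq with h | h
      · rw [h]; exact one_mem _
      · rw [h, ← ζ_two_mul_pow_self hm]; exact Subgroup.npow_mem_zpowers _ _
    simpa using mul_mem hsign (Subgroup.zpow_mem_zpowers _ k)
  · intro hu
    obtain ⟨k, rfl⟩ := Subgroup.mem_zpowers_iff.1 hu
    rw [ζ_two_mul_zpow_sq]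
    exact Subgroup.zpow_mem_zpowers _ k

lemma w_mul_diagSU2 (z : Circle) : w * diagSU2 z = diagSU2 z⁻¹ * w := by
  rw [diagSU2_mul_w, inv_inv]

lemma w_inv : w⁻¹ = w * diagSU2 (-1) :=
  inv_eq_of_mul_eq_one_right <| by
    rw [← mul_assoc, w_mul_w, ← map_mul, neg_one_mul, neg_neg, map_one]

lemma w_mul_diagSU2_sq (z : Circle) : (w * diagSU2 z) ^ 2 = diagSU2 (-1) := by
  rw [sq, mul_assoc, ← mul_assoc (diagSU2 z), diagSU2_mul_w, mul_assoc, ← map_mul,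
    inv_mul_cancel, map_one, mul_one, w_mul_w]

lemma mem_Tset_or_mem_wTset_of_mul_diagSU2_eq {g : SU2} {z z' : Circle} (hz : z ^ 2 ≠ 1)
    (h : g * diagSU2 z = diagSU2 z' * g) : g ∈ Tset ∨ g ∈ wTset := by
  have e (i j : Fin 2) := congrFun₂ (congrArg Subtype.val h) i j
  have e00 := e 0 0
  have e01 := e 0 1
  have e10 := e 1 0
  have e11 := e 1 1
  simp [coe_diagSU2, mul_apply, Fin.sum_univ_two] at e00 e01 e10 e11
  have hne : (z : ℂ) ≠ (z : ℂ)⁻¹ := by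
    refine fun h' => hz (Circle.ext ?_)
    rw [Circle.coe_pow, sq, Circle.coe_one]
    nth_rewrite 2 [h']
    exact mul_inv_cancel₀ (Circle.coe_ne_zero z)
  by_cases hd : g.1 0 0 = 0 ∧ g.1 1 1 = 0
  · exact Or.inr hd
  have hzz : (z' : ℂ) = z := by
    rcases not_and_or.1 hd with h0 | h1
    · exact (mul_left_cancel₀ h0 (by linear_combination e00)).symm
    · exact inv_inj.1 (mul_left_cancel₀ h1 (by linear_combination -e11))
  rw [hzz] at e01 e10
  refine Or.inl ⟨?_, ?_⟩
  · by_contra h01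
    exact hne (mul_left_cancel₀ h01 (by linear_combination e01)).symm
  · by_contra h10
    exact hne (mul_left_cancel₀ h10 (by linear_combination e10))

lemma Circle.exists_coe_eq {a : ℂ} (ha : ‖a‖ = 1) : ∃ u : Circle, (u : ℂ) = a :=
  ⟨⟨a, by simp [Submonoid.unitSphere, ha]⟩, rfl⟩

lemma exists_diagSU2_eq_of_mem_Tset {g : SU2} (hg : g ∈ Tset) : ∃ u, diagSU2 u = g := by
  obtain ⟨h01, h10⟩ := hg
  have hdet : g.1 0 0 * g.1 1 1 = 1 := by
    simpa [det_fin_two, h01] using g.2.2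
  have hunit : g.1 0 0 * starRingEnd ℂ (g.1 0 0) = 1 := by
    simpa [mul_apply, Fin.sum_univ_two, h01] using congrFun₂ g.2.1.2 0 0
  rw [Complex.mul_conj'] at hunit
  obtain ⟨u, hu⟩ := Circle.exists_coe_eq
    ((pow_eq_one_iff_of_nonneg (norm_nonneg _) two_ne_zero).1 (by exact_mod_cast hunit))
  refine ⟨u, Subtype.ext ?_⟩
  rw [coe_diagSU2, Circle.coe_inv, hu, ← eq_inv_of_mul_eq_one_right hdet]
  ext i j; fin_cases i <;> fin_cases j <;> simp [h01, h10]

lemma exists_w_mul_diagSU2_eq_of_mem_wTset {g : SU2} (hg : g ∈ wTset) :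
    ∃ u, w * diagSU2 u = g := by
  obtain ⟨h00, h11⟩ := hg
  obtain ⟨u, hu⟩ := exists_diagSU2_eq_of_mem_Tset (g := w⁻¹ * g) <| by
    rw [w_inv]
    constructor <;>
      simp [Submonoid.coe_mul, coe_w, coe_diagSU2, mul_apply, Fin.sum_univ_two, h00, h11]
  exact ⟨u, by rw [hu, mul_inv_cancel_left]⟩

lemma diagSU2_conj_w_mul (u z : Circle) :
    diagSU2 u * (w * diagSU2 z) * (diagSU2 u)⁻¹ = w * diagSU2 (z * (u ^ 2)⁻¹) := by
  rw [← map_inv, ← mul_assoc, diagSU2_mul_w, mul_assoc, mul_assoc, ← map_mul, ← map_mul, sq,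
    _root_.mul_inv, mul_left_comm]

def dicyclic (Z : Subgroup Circle) (hZ : -1 ∈ Z) : Subgroup SU2 where
  carrier := {x | ∃ z ∈ Z, x = diagSU2 z ∨ x = w * diagSU2 z}
  one_mem' := ⟨1, one_mem Z, Or.inl (map_one diagSU2).symm⟩
  mul_mem' := by
    rintro _ _ ⟨z, hz, rfl | rfl⟩ ⟨z', hz', rfl | rfl⟩
    · exact ⟨z * z', mul_mem hz hz', Or.inl (map_mul _ _ _).symm⟩
    · refine ⟨z⁻¹ * z', mul_mem (inv_mem hz) hz', Or.inr ?_⟩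
      rw [← mul_assoc, diagSU2_mul_w, mul_assoc, map_mul]
    · exact ⟨z * z', mul_mem hz hz', Or.inr (by rw [mul_assoc, map_mul])⟩
    · refine ⟨-1 * (z⁻¹ * z'), mul_mem hZ (mul_mem (inv_mem hz) hz'), Or.inl ?_⟩
      rw [mul_assoc, ← mul_assoc (diagSU2 z), diagSU2_mul_w, mul_assoc, ← map_mul,
        ← mul_assoc, w_mul_w, ← map_mul]
  inv_mem' := by
    rintro _ ⟨z, hz, rfl | rfl⟩
    · exact ⟨z⁻¹, inv_mem hz, Or.inl (map_inv _ _).symm⟩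
    · refine ⟨z * -1, mul_mem hz hZ, Or.inr ?_⟩
      rw [_root_.mul_inv_rev, w_inv, ← mul_assoc, ← map_inv, diagSU2_mul_w, inv_inv, mul_assoc,
        ← map_mul]

lemma neg_one_mem_comap_sq (Z : Subgroup Circle) : -1 ∈ Z.comap (powMonoidHom 2) := by
  rw [Subgroup.mem_comap, powMonoidHom_apply, neg_one_sq]
  exact one_mem Z

section Dicyclic

variable {Z : Subgroup Circle} {hZ : -1 ∈ Z}

lemma diagSU2_mem_dicyclic {z : Circle} :
    diagSU2 z ∈ dicyclic Z hZ ↔ z ∈ Z := by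
  constructor
  · rintro ⟨z', hz', h | h⟩
    · rwa [diagSU2_injective h]
    · exact absurd h (diagSU2_ne_w_mul _ _)
  · exact fun hz => ⟨z, hz, Or.inl rfl⟩

lemma w_mul_diagSU2_mem_dicyclic {z : Circle} :
    w * diagSU2 z ∈ dicyclic Z hZ ↔ z ∈ Z := by
  constructor
  · rintro ⟨z', hz', h | h⟩
    · exact absurd h.symm (diagSU2_ne_w_mul _ _)
    · rwa [diagSU2_injective (mul_left_cancel h)]
  · exact fun hz => ⟨z, hz, Or.inr rfl⟩

lemma w_mem_dicyclic : w ∈ dicyclic Z hZ := by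
  simpa using (w_mul_diagSU2_mem_dicyclic (hZ := hZ)).2 (one_mem Z)

lemma diagSU2_conj_mem_dicyclic {u : Circle} {x : SU2} (hu : u ^ 2 ∈ Z)
    (hx : x ∈ dicyclic Z hZ) :
    diagSU2 u * x * (diagSU2 u)⁻¹ ∈ dicyclic Z hZ := by
  obtain ⟨z, hz, rfl | rfl⟩ := hx
  · rwa [← map_inv, ← map_mul, ← map_mul, mul_inv_cancel_comm, diagSU2_mem_dicyclic]
  · rw [diagSU2_conj_w_mul, w_mul_diagSU2_mem_dicyclic]
    exact mul_mem hz (inv_mem hu)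

lemma w_conj_mem_dicyclic {x : SU2} (hx : x ∈ dicyclic Z hZ) :
    w * x * w⁻¹ ∈ dicyclic Z hZ := by
  have hw (z : Circle) : w * diagSU2 z * w⁻¹ = diagSU2 z⁻¹ := by
    rw [w_mul_diagSU2, mul_inv_cancel_right]
  obtain ⟨z, hz, rfl | rfl⟩ := hx
  · rw [hw, diagSU2_mem_dicyclic]
    exact inv_mem hz
  · rw [mul_assoc w, hw, w_mul_diagSU2_mem_dicyclic]
    exact inv_mem hz

lemma conj_mem_dicyclic {g x : SU2}
    (hg : g ∈ dicyclic (Z.comap (powMonoidHom 2)) (neg_one_mem_comap_sq Z))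
    (hx : x ∈ dicyclic Z hZ) : g * x * g⁻¹ ∈ dicyclic Z hZ := by
  obtain ⟨u, hu, rfl | rfl⟩ := hg
  · exact diagSU2_conj_mem_dicyclic hu hx
  · rw [show w * diagSU2 u * x * (w * diagSU2 u)⁻¹ =
        w * (diagSU2 u * x * (diagSU2 u)⁻¹) * w⁻¹ by group]
    exact w_conj_mem_dicyclic (diagSU2_conj_mem_dicyclic hu hx)

lemma dicyclic_comap_sq_le_normalizer :
    dicyclic (Z.comap (powMonoidHom 2)) (neg_one_mem_comap_sq Z) ≤
      Subgroup.normalizer (dicyclic Z hZ) :=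
  fun _ hg => Subgroup.mem_normalizer_iff.2 fun _ =>
    ⟨conj_mem_dicyclic hg, fun h => by simpa [mul_assoc] using conj_mem_dicyclic (inv_mem hg) h⟩

lemma mem_Tset_or_mem_wTset_of_mem_normalizer_dicyclic (h4 : ∃ z ∈ Z, z ^ 4 ≠ 1) {g : SU2}
    (hg : g ∈ Subgroup.normalizer (dicyclic Z hZ)) : g ∈ Tset ∨ g ∈ wTset := by
  obtain ⟨z, hz, hz4⟩ := h4
  obtain ⟨z', -, h | h⟩ := (Subgroup.mem_normalizer_iff.1 hg _).1 (diagSU2_mem_dicyclic.2 hz)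
  · refine mem_Tset_or_mem_wTset_of_mul_diagSU2_eq (z' := z') (fun h2 => hz4 ?_)
      (mul_inv_eq_iff_eq_mul.1 h)
    rw [show 4 = 2 * 2 from rfl, pow_mul, h2, one_pow]
  · -- squaring the anti-diagonal conjugate gives the central element `-1`, so `z ^ 2 = -1`
    refine absurd ?_ hz4
    have hsq := congrArg (· ^ 2) h
    simp only [conj_pow, w_mul_diagSU2_sq, ← map_pow] at hsq
    have hc := Subgroup.mem_center_iff.1 diagSU2_neg_one_mem_center g
    rw [← mul_inv_eq_of_eq_mul hc, mul_left_inj, mul_right_inj] at hsq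
    rw [show 4 = 2 * 2 from rfl, pow_mul, diagSU2_injective hsq, neg_one_sq]

lemma sq_mem_of_diagSU2_mem_normalizer {u : Circle}
    (hu : diagSU2 u ∈ Subgroup.normalizer (dicyclic Z hZ)) : u ^ 2 ∈ Z := by
  have h := (Subgroup.mem_normalizer_iff.1 hu _).1 (w_mem_dicyclic (hZ := hZ))
  rw [← mul_one w, ← map_one diagSU2, diagSU2_conj_w_mul, one_mul,
    w_mul_diagSU2_mem_dicyclic] at h
  exact inv_mem_iff.1 h

lemma normalizer_dicyclic_le (h4 : ∃ z ∈ Z, z ^ 4 ≠ 1) :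
    Subgroup.normalizer (dicyclic Z hZ) ≤
      dicyclic (Z.comap (powMonoidHom 2)) (neg_one_mem_comap_sq Z) := by
  intro g hg
  rcases mem_Tset_or_mem_wTset_of_mem_normalizer_dicyclic h4 hg with hT | hwT
  · obtain ⟨u, rfl⟩ := exists_diagSU2_eq_of_mem_Tset hT
    exact diagSU2_mem_dicyclic.2 (sq_mem_of_diagSU2_mem_normalizer hg)
  · obtain ⟨u, rfl⟩ := exists_w_mul_diagSU2_eq_of_mem_wTset hwT
    have hw : w ∈ Subgroup.normalizer (dicyclic Z hZ) := Subgroup.le_normalizer w_mem_dicyclic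
    have hu : diagSU2 u ∈ Subgroup.normalizer (dicyclic Z hZ) := by
      simpa using mul_mem (inv_mem hw) hg
    exact w_mul_diagSU2_mem_dicyclic.2 (sq_mem_of_diagSU2_mem_normalizer hu)

theorem normalizer_dicyclic (h4 : ∃ z ∈ Z, z ^ 4 ≠ 1) :
    Subgroup.normalizer (dicyclic Z hZ) =
      dicyclic (Z.comap (powMonoidHom 2)) (neg_one_mem_comap_sq Z) :=
  le_antisymm (normalizer_dicyclic_le h4) dicyclic_comap_sq_le_normalizer

end Dicyclic

lemma neg_one_mem_zpowers_ζ (q : ℕ) : -1 ∈ Subgroup.zpowers (ζ (2 ^ (q + 1))) := by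
  rw [pow_succ', ← ζ_two_mul_pow_self (pow_ne_zero q two_ne_zero)]
  exact Subgroup.npow_mem_zpowers _ _

lemma genQ_succ_eq_dicyclic (q : ℕ) :
    genQ (q + 1) = dicyclic (Subgroup.zpowers (ζ (2 ^ (q + 1)))) (neg_one_mem_zpowers_ζ q) := by
  have hξ : diagSU2 (ζ (2 ^ (q + 1))) ∈ genQ (q + 1) := by
    rw [← ξ_eq_diagSU2]; exact Subgroup.subset_closure (by simp)
  have hw : w ∈ genQ (q + 1) := Subgroup.subset_closure (by simp)
  refine le_antisymm ?_ ?_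
  · rw [genQ, Subgroup.closure_le, Set.insert_subset_iff, Set.singleton_subset_iff, ξ_eq_diagSU2]
    exact ⟨diagSU2_mem_dicyclic.2 (Subgroup.mem_zpowers _), w_mem_dicyclic⟩
  · rintro x ⟨z, hz, rfl | rfl⟩ <;> obtain ⟨k, rfl⟩ := Subgroup.mem_zpowers_iff.1 hz <;>
      rw [map_zpow]
    · exact zpow_mem hξ k
    · exact mul_mem hw (zpow_mem hξ k)

/-- For `n ≥ 4`, the normalizer of `Q_{2^n}` in `SU(2)` is `Q_{2^{n+1}}`. -/
theorem stmt11 (n : ℕ) (hn : 4 ≤ n) :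
    Subgroup.normalizer (genQ (n - 1)) = genQ n := by
  obtain ⟨q, rfl⟩ : ∃ q, n = q + 2 := ⟨n - 2, by omega⟩
  have h4 : ∃ z ∈ Subgroup.zpowers (ζ (2 ^ (q + 1))), z ^ 4 ≠ 1 :=
    ⟨_, Subgroup.mem_zpowers _, ζ_pow_four_ne_one <|
      (show 4 < 2 ^ 3 by norm_num).trans_le (Nat.pow_le_pow_right two_pos (by omega))⟩
  rw [show q + 2 - 1 = q + 1 by omega, genQ_succ_eq_dicyclic, normalizer_dicyclic h4,
    genQ_succ_eq_dicyclic]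
  congr 1
  rw [comap_sq_zpowers_ζ (by positivity), ← pow_succ']

end
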